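/- Let u be an axisymmetric vector field on Ω with u ∈ C⁰([0,T], C¹(Ω)) (so that u_r/r ∈ L^∞([0,T]×Ω)). Then for every α ∈ ℝ and every solution (x_t, ξ_t, b_t) of the bicharacteristic–amplitude ODE system with (ξ₀)_θ = 0, |ξ₀| = 1, b₀·ξ₀ = 0 and |b₀| = r₀^{−α}, the quantity r_t^α b_t remains bounded on [0,T], uniformly in the initial data; in particular β_{−α}(T) < ∞. -/

import Mathlib

/-!
The right-hand side of the amplitude equation is the reflection of `∇u·b` in the line `ℝξ`,
so `|ḃ| = |∇u·b| ≤ M|b|` and Grönwall gives `|b_t| ≤ |b_0| e^{Mt}`.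
Axisymmetry forces the horizontal part of `u` to vanish on the axis, so by the mean value
theorem it is at most `M r`; hence `|d(r²)/dt| ≤ 2Mr²`, and Grönwall forwards and backwards in
time gives `e^{-Mt} ≤ r_t / r_0 ≤ e^{Mt}`. With `|b_0| = r_0^{-α}` this bounds `r_t^α |b_t|` by
`(r_t / r_0)^α e^{MT} ≤ e^{(|α| + 1) M T}`.
-/

open MeasureTheory Real Filter Topology
open scoped ENNReal RealInnerProductSpace FourierTransform

noncomputable section

abbrev V3 : Type := EuclideanSpace ℝ (Fin 3)

namespace AxiEuler

/-- The `i`-th standard basis vector of `ℝ³`. -/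
def e (i : Fin 3) : V3 := EuclideanSpace.single i 1

/-- Distance to the `z`-axis (the cylindrical radius `r`). -/
def rad (x : V3) : ℝ := Real.sqrt (x 0 ^ 2 + x 1 ^ 2)

/-- Radial unit vector `e_r` at `x` (zero on the axis). -/
def er (x : V3) : V3 := (rad x)⁻¹ • (x 0 • e 0 + x 1 • e 1)

/-- Azimuthal unit vector `e_θ` at `x` (zero on the axis). -/
def eθ (x : V3) : V3 := (rad x)⁻¹ • ((-(x 1)) • e 0 + x 0 • e 1)

/-- Vertical unit vector `e_z`. -/
def ez : V3 := e 2

/-- Rotation of angle `θ` about the `z`-axis. -/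
def rot (θ : ℝ) (x : V3) : V3 :=
  (Real.cos θ * x 0 - Real.sin θ * x 1) • e 0 +
    (Real.sin θ * x 0 + Real.cos θ * x 1) • e 1 + x 2 • e 2

/-- A vector field is axisymmetric if it is equivariant under rotations about the `z`-axis. -/
def AxiSymm (u : V3 → V3) : Prop := ∀ θ x, u (rot θ x) = rot θ (u x)

/-- A set is axisymmetric if it is invariant under rotations about the `z`-axis. -/
def AxiSymmSet (Ω : Set V3) : Prop := ∀ θ x, x ∈ Ω → rot θ x ∈ Ω

/-- The admissible domains: `ℝ³` itself, or a bounded open set, invariant by rotations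
about the `z`-axis. -/
structure GoodDomain (Ω : Set V3) : Prop where
  isOpen : IsOpen Ω
  axi : AxiSymmSet Ω
  univ_or_bounded : Ω = Set.univ ∨ Bornology.IsBounded Ω

/-- Partial derivative `∂ᵢ uⱼ`. -/
def pd (u : V3 → V3) (x : V3) (i j : Fin 3) : ℝ := fderiv ℝ u x (e i) j

/-- Divergence of a vector field on `ℝ³`. -/
def div3 (u : V3 → V3) (x : V3) : ℝ := pd u x 0 0 + pd u x 1 1 + pd u x 2 2

/-- Curl of a vector field on `ℝ³`. -/
def curl3 (u : V3 → V3) (x : V3) : V3 :=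
  (pd u x 1 2 - pd u x 2 1) • e 0 + (pd u x 2 0 - pd u x 0 2) • e 1 +
    (pd u x 0 1 - pd u x 1 0) • e 2

/-- Cylindrical radial component `u_r`. -/
def compR (u : V3 → V3) (x : V3) : ℝ := ⟪u x, er x⟫

/-- Cylindrical azimuthal component `u_θ`. -/
def compθ (u : V3 → V3) (x : V3) : ℝ := ⟪u x, eθ x⟫

/-- Cylindrical vertical component `u_z`. -/
def compZ (u : V3 → V3) (x : V3) : ℝ := ⟪u x, ez⟫

/-- Toroidal part `w_r e_r + w_z e_z` of a vector field. -/
def toroidal (w : V3 → V3) (x : V3) : V3 := (⟪w x, er x⟫) • er x + (⟪w x, ez⟫) • ez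

/-- `ν` is an outward normal vector of `Ω` at the boundary point `x`, in the sense of a
`C¹` local defining function. -/
def IsOuterNormalAt (Ω : Set V3) (x ν : V3) : Prop :=
  x ∈ frontier Ω ∧ ν ≠ 0 ∧
    ∃ f : V3 → ℝ, ContDiffAt ℝ 1 f x ∧ f x = 0 ∧ (∀ᶠ y in nhds x, y ∈ Ω → f y ≤ 0) ∧
      gradient f x = ν

/-- The impermeability boundary condition `w ⬝ n = 0` on `∂Ω`. -/
def NoFlux (Ω : Set V3) (w : V3 → V3) : Prop :=
  ∀ x ν, IsOuterNormalAt Ω x ν → ⟪w x, ν⟫ = 0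

/-- The incompressible Euler equations on `(0,T) × Ω` with pressure `P` and
impermeable boundary condition. -/
def EulerEq (Ω : Set V3) (T : ℝ) (u : ℝ → V3 → V3) (P : ℝ → V3 → ℝ) : Prop :=
  ∀ t ∈ Set.Ioo 0 T,
    (∀ x ∈ Ω,
      deriv (fun s => u s x) t + fderiv ℝ (u t) x (u t x) + gradient (P t) x = 0 ∧
        div3 (u t) x = 0) ∧
      NoFlux Ω (u t)

/-- The Euler equations linearized about `u`, with pressure `Q` and forcing `f`. -/
def LinEulerFEq (Ω : Set V3) (T : ℝ) (u v : ℝ → V3 → V3) (Q : ℝ → V3 → ℝ)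
    (f : ℝ → V3 → V3) : Prop :=
  ∀ t ∈ Set.Ioo 0 T,
    (∀ x ∈ Ω,
      deriv (fun s => v s x) t + fderiv ℝ (v t) x (u t x) + fderiv ℝ (u t) x (v t x) +
          gradient (Q t) x = f t x ∧
        div3 (v t) x = 0) ∧
      NoFlux Ω (v t)

/-- The Euler equations linearized about `u` (no forcing). -/
def LinEulerEq (Ω : Set V3) (T : ℝ) (u v : ℝ → V3 → V3) (Q : ℝ → V3 → ℝ) : Prop :=
  LinEulerFEq Ω T u v Q (fun _ _ => 0)

/-- Complexification of a vector of `ℝ³`. -/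
def toC (v : V3) : EuclideanSpace ℂ (Fin 3) :=
  (WithLp.equiv 2 (Fin 3 → ℂ)).symm fun i => (v i : ℂ)

/-- Bessel-potential `Hˢ` norm of a vector field on all of `ℝ³`, via the Fourier transform. -/
def sobNorm (s : ℝ) (f : V3 → V3) : ℝ≥0∞ :=
  eLpNorm (fun ξ : V3 => ((1 + ‖ξ‖ ^ 2) ^ (s / 2)) • (𝓕 (fun x => toC (f x)) ξ)) 2 volume

/-- `Hˢ(Ω)` norm, defined by infimum over all extensions to `ℝ³`. -/
def HsNorm (s : ℝ) (Ω : Set V3) (f : V3 → V3) : ℝ≥0∞ :=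
  ⨅ (g : V3 → V3) (_ : Set.EqOn g f Ω), sobNorm s g

/-- Membership in `Hˢ(Ω)`. -/
def MemHs (s : ℝ) (Ω : Set V3) (f : V3 → V3) : Prop := HsNorm s Ω f < ⊤

/-- `u ∈ C⁰(I, Hˢ(Ω))`. -/
def ContHsOn (s : ℝ) (I : Set ℝ) (Ω : Set V3) (u : ℝ → V3 → V3) : Prop :=
  (∀ t ∈ I, MemHs s Ω (u t)) ∧
    ∀ t ∈ I, Tendsto (fun t' => HsNorm s Ω (fun x => u t' x - u t x)) (𝓝[I] t) (𝓝 0)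

/-- `u ∈ C¹(I, Hˢ(Ω))`: there is a time derivative `u'` in `C⁰(I, Hˢ(Ω))`, the difference
quotients converging in `Hˢ(Ω)`. -/
def C1HsOn (s : ℝ) (I : Set ℝ) (Ω : Set V3) (u : ℝ → V3 → V3) : Prop :=
  ∃ u' : ℝ → V3 → V3, ContHsOn s I Ω u' ∧ ∀ t ∈ I,
    Tendsto (fun t' => HsNorm s Ω (fun x => (t' - t)⁻¹ • (u t' x - u t x) - u' t x))
      (𝓝[I \ {t}] t) (𝓝 0)

/-- Hypothesis (H1): `u ∈ C⁰([0,T), Hˢ(Ω)) ∩ C¹([0,T), H^{s-1}(Ω))`. -/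
def RegH1 (s T : ℝ) (Ω : Set V3) (u : ℝ → V3 → V3) : Prop :=
  ContHsOn s (Set.Ico 0 T) Ω u ∧ C1HsOn (s - 1) (Set.Ico 0 T) Ω u

/-- Closed interval variant: `u ∈ C⁰([0,T], Hˢ(Ω)) ∩ C¹([0,T], H^{s-1}(Ω))`. -/
def RegH1c (s T : ℝ) (Ω : Set V3) (u : ℝ → V3 → V3) : Prop :=
  ContHsOn s (Set.Icc 0 T) Ω u ∧ C1HsOn (s - 1) (Set.Icc 0 T) Ω u

/-- Weighted norm `‖r^α v‖_{L^p(Ω)}` for a vector field `v`. -/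
def wLp (α : ℝ) (p : ℝ≥0∞) (Ω : Set V3) (v : V3 → V3) : ℝ≥0∞ :=
  eLpNorm (fun x => (rad x ^ α) • v x) p (volume.restrict Ω)

/-- Weighted norm `‖r^α f‖_{L^p(Ω)}` for a scalar function `f`. -/
def wLpS (α : ℝ) (p : ℝ≥0∞) (Ω : Set V3) (f : V3 → ℝ) : ℝ≥0∞ :=
  eLpNorm (fun x => (rad x ^ α) * f x) p (volume.restrict Ω)

/-- `v` is an axisymmetric solution of the linearized Euler equations on `(0,T) × Ω`
with initial datum in `H¹`. -/
def IsLinSol (Ω : Set V3) (T : ℝ) (u v : ℝ → V3 → V3) : Prop :=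
  (∃ Q, LinEulerEq Ω T u v Q) ∧ ContHsOn 1 (Set.Ico 0 T) Ω v ∧ AxiSymm (v 0)

/-- The weighted growth bound `λ_{p,σ}(t)` of the linearized Euler semigroup. -/
def lambda (Ω : Set V3) (T : ℝ) (u : ℝ → V3 → V3) (p : ℝ≥0∞) (σ : ℝ) (t : ℝ) : ℝ≥0∞ :=
  ⨆ (v : ℝ → V3 → V3) (_ : IsLinSol Ω T u v),
    wLp (-σ) p Ω (v t) / wLp (-σ) p Ω (v 0)

/-- The bicharacteristic–amplitude ODE system along the flow of `u`, on `[0,T]`: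
`ẋ = u(t,x)`, `ξ̇ = -(∇u)ᵀ ξ`, `ḃ = -b·∇u + 2 (b·∇u·ξ/|ξ|²) ξ`. -/
def Bichar (u : ℝ → V3 → V3) (x ξ b : ℝ → V3) (T : ℝ) : Prop :=
  ∀ t ∈ Set.Icc 0 T,
    HasDerivAt x (u t (x t)) t ∧
    HasDerivAt ξ (-(ContinuousLinearMap.adjoint (fderiv ℝ (u t) (x t)) (ξ t))) t ∧
    HasDerivAt b (-(fderiv ℝ (u t) (x t) (b t)) +
      (2 * ⟪fderiv ℝ (u t) (x t) (b t), ξ t⟫ / ‖ξ t‖ ^ 2) • ξ t) t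

/-- The fluid Lyapunov-type quantity `β_σ(t)`: supremum of `r_t^{-σ} |b_t|` over all
solutions of the bicharacteristic–amplitude system with admissible initial data. -/
def beta (Ω : Set V3) (u : ℝ → V3 → V3) (σ : ℝ) (t : ℝ) : ℝ≥0∞ :=
  ⨆ (s : (ℝ → V3) × (ℝ → V3) × (ℝ → V3)) (_ :
      Bichar u s.1 s.2.1 s.2.2 t ∧ s.1 0 ∈ Ω ∧
        ⟪s.2.1 0, eθ (s.1 0)⟫ = 0 ∧ ‖s.2.1 0‖ = 1 ∧
        ⟪s.2.2 0, s.2.1 0⟫ = 0 ∧ ‖s.2.2 0‖ = rad (s.1 0) ^ σ),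
    ENNReal.ofReal (rad (s.1 t) ^ (-σ) * ‖s.2.2 t‖)

/-- `u` extends beyond time `T` as a solution with (H1) regularity. -/
def ExtendsBeyond (s : ℝ) (Ω : Set V3) (u : ℝ → V3 → V3) (T : ℝ) : Prop :=
  ∃ T' > T, ∃ u' : ℝ → V3 → V3, ∃ P' : ℝ → V3 → ℝ,
    (∀ t ∈ Set.Ico (0 : ℝ) T, ∀ x ∈ Ω, u' t x = u t x) ∧
      EulerEq Ω T' u' P' ∧ RegH1 s T' Ω u'

/-- Squared Frobenius norm of the Jacobian matrix of `u`. -/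
def frob2 (u : V3 → V3) (x : V3) : ℝ := ∑ i : Fin 3, ∑ j : Fin 3, (pd u x i j) ^ 2

/-- Second partial derivative `∂ₖ ∂ᵢ uⱼ`. -/
def pd2 (u : V3 → V3) (x : V3) (k i j : Fin 3) : ℝ := fderiv ℝ (fun y => pd u y i j) x (e k)

/-- Squared Frobenius norm of the Hessian of `u`. -/
def frobH2 (u : V3 → V3) (x : V3) : ℝ :=
  ∑ k : Fin 3, ∑ i : Fin 3, ∑ j : Fin 3, (pd2 u x k i j) ^ 2


end AxiEuler

open Set

section Gronwall

variable {E : Type*} [NormedAddCommGroup E] [NormedSpace ℝ E] {f f' : ℝ → E} {a b K : ℝ}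

theorem norm_le_norm_mul_exp_of_norm_deriv_le (hf : ∀ s ∈ Icc a b, HasDerivAt f (f' s) s)
    (bound : ∀ s ∈ Icc a b, ‖f' s‖ ≤ K * ‖f s‖) {t : ℝ} (ht : t ∈ Icc a b) :
    ‖f t‖ ≤ ‖f a‖ * exp (K * (t - a)) := by
  have := norm_le_gronwallBound_of_norm_deriv_right_le
    (fun s hs => (hf s hs).continuousAt.continuousWithinAt)
    (fun s hs => (hf s (Ico_subset_Icc_self hs)).hasDerivWithinAt) le_rfl
    (fun s hs => by rw [add_zero]; exact bound s (Ico_subset_Icc_self hs)) t ht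
  rwa [gronwallBound_ε0] at this

theorem norm_le_norm_mul_exp_of_norm_deriv_le_rev (hf : ∀ s ∈ Icc a b, HasDerivAt f (f' s) s)
    (bound : ∀ s ∈ Icc a b, ‖f' s‖ ≤ K * ‖f s‖) {t : ℝ} (ht : t ∈ Icc a b) :
    ‖f a‖ ≤ ‖f t‖ * exp (K * (t - a)) := by
  have hmem : ∀ s ∈ Icc a t, a + t - s ∈ Icc a b := fun s hs =>
    ⟨by linarith [hs.2], by linarith [hs.1, ht.2]⟩
  have hrev : ∀ s ∈ Icc a t, HasDerivAt (fun τ => f (a + t - τ)) (-f' (a + t - s)) s :=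
    fun s hs => by
      simpa [Function.comp_def] using
        (hf _ (hmem s hs)).scomp s ((hasDerivAt_id s).const_sub (a + t))
  simpa using norm_le_norm_mul_exp_of_norm_deriv_le hrev
    (fun s hs => by simpa using bound _ (hmem s hs)) (right_mem_Icc.2 ht.1)

end Gronwall

theorem norm_neg_add_two_inner_div_smul {F : Type*} [NormedAddCommGroup F] [InnerProductSpace ℝ F]
    (v ξ : F) : ‖-v + (2 * ⟪v, ξ⟫ / ‖ξ‖ ^ 2) • ξ‖ = ‖v‖ := by
  rw [← (ℝ ∙ ξ).reflection.norm_map v, Submodule.reflection_singleton_apply, real_inner_comm,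
    neg_add_eq_sub]
  congr 1
  simp only [RCLike.ofReal_real_eq_id, id]
  module

theorem rpow_mul_rpow_neg_le_rpow_abs {a c E : ℝ} (α : ℝ) (ha : 0 ≤ a) (hc : 0 ≤ c) (hE : 0 < E)
    (hac : a ≤ c * E) (hca : c ≤ a * E) : a ^ α * c ^ (-α) ≤ E ^ |α| := by
  rcases ha.eq_or_lt with rfl | ha'
  · obtain rfl : c = 0 := le_antisymm (by simpa using hca) hc
    rcases eq_or_ne α 0 with rfl | hα
    · simp
    · rw [zero_rpow hα, zero_mul]; positivity
  have hc' : 0 < c := by nlinarith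
  rw [rpow_neg hc, ← div_eq_mul_inv, ← div_rpow ha hc]
  rcases le_or_gt 0 α with hα | hα
  · rw [abs_of_nonneg hα]
    exact rpow_le_rpow (by positivity) ((div_le_iff₀ hc').2 (by linarith)) hα
  · rw [abs_of_neg hα, ← inv_div, inv_rpow (by positivity), ← rpow_neg (by positivity)]
    exact rpow_le_rpow (by positivity) ((div_le_iff₀ ha').2 (by linarith)) (by linarith)

namespace AxiEuler

theorem e_apply (i j : Fin 3) : e i j = if j = i then 1 else 0 := by
  simp [e]

theorem rad_nonneg (y : V3) : 0 ≤ rad y := sqrt_nonneg _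

theorem rad_sq (y : V3) : rad y ^ 2 = y 0 ^ 2 + y 1 ^ 2 :=
  sq_sqrt (by positivity)

theorem abs_mul_add_mul_le_rad_mul_rad (x y : V3) :
    |x 0 * y 0 + x 1 * y 1| ≤ rad x * rad y := by
  rw [rad, rad, ← sqrt_mul (by positivity)]
  exact abs_le_sqrt (by nlinarith [sq_nonneg (x 0 * y 1 - x 1 * y 0)])

theorem rad_le_norm (y : V3) : rad y ≤ ‖y‖ := by
  rw [EuclideanSpace.norm_eq, Fin.sum_univ_three]
  exact sqrt_le_sqrt (by simp only [norm_eq_abs, sq_abs]; nlinarith [sq_nonneg (y 2)])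

theorem rad_sub_of_onAxis {p : V3} (h0 : p 0 = 0) (h1 : p 1 = 0) (y : V3) :
    rad (y - p) = rad y := by
  simp [rad, h0, h1]

theorem norm_sub_axisPoint (x : V3) : ‖x - x 2 • e 2‖ = rad x := by
  rw [EuclideanSpace.norm_eq, Fin.sum_univ_three]
  simp [rad, e_apply]

theorem AxiSymm.apply_onAxis {v : V3 → V3} (hv : AxiSymm v) {p : V3} (h0 : p 0 = 0)
    (h1 : p 1 = 0) : v p 0 = 0 ∧ v p 1 = 0 := by
  have hp : rot π p = p := by
    ext j; fin_cases j <;> simp [rot, e_apply, h0, h1]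
  have h := hv π p
  rw [hp] at h
  have h0' := congrArg (fun w : V3 => w 0) h
  have h1' := congrArg (fun w : V3 => w 1) h
  simp [rot, e_apply] at h0' h1'
  constructor <;> linarith

theorem AxiSymm.rad_apply_le {v : V3 → V3} (hv : AxiSymm v) (hd : Differentiable ℝ v) {M : ℝ}
    (hM : ∀ y, ‖fderiv ℝ v y‖ ≤ M) (x : V3) : rad (v x) ≤ M * rad x := by
  set p := x 2 • e 2
  obtain ⟨hp0, hp1⟩ := hv.apply_onAxis (p := p) (by simp [p, e_apply]) (by simp [p, e_apply])
  calc rad (v x) = rad (v x - v p) := (rad_sub_of_onAxis hp0 hp1 _).symm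
    _ ≤ ‖v x - v p‖ := rad_le_norm _
    _ ≤ M * ‖x - p‖ := convex_univ.norm_image_sub_le_of_norm_fderiv_le (fun y _ => hd y)
        (fun y _ => hM y) (mem_univ p) (mem_univ x)
    _ = M * rad x := by rw [norm_sub_axisPoint]

theorem hasDerivAt_rad_sq {x : ℝ → V3} {x' : V3} {t : ℝ} (hx : HasDerivAt x x' t) :
    HasDerivAt (fun s => rad (x s) ^ 2) (2 * (x t 0 * x' 0 + x t 1 * x' 1)) t := by
  have hcoord (i : Fin 3) : HasDerivAt (fun s => x s i) (x' i) t :=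
    (EuclideanSpace.proj (𝕜 := ℝ) i).hasFDerivAt.comp_hasDerivAt t hx
  simp only [rad_sq]
  refine (((hcoord 0).fun_pow 2).add ((hcoord 1).fun_pow 2)).congr_deriv ?_
  push_cast
  ring

theorem rad_flow_le {u : ℝ → V3 → V3} {x : ℝ → V3} {T M : ℝ}
    (hx : ∀ s ∈ Icc 0 T, HasDerivAt x (u s (x s)) s) (hax : ∀ s ∈ Icc 0 T, AxiSymm (u s))
    (hd : ∀ s ∈ Icc 0 T, Differentiable ℝ (u s))
    (hM : ∀ s ∈ Icc 0 T, ∀ y, ‖fderiv ℝ (u s) y‖ ≤ M) {t : ℝ} (ht : t ∈ Icc 0 T) :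
    rad (x t) ≤ rad (x 0) * exp (M * t) ∧ rad (x 0) ≤ rad (x t) * exp (M * t) := by
  have hderiv := fun s hs => hasDerivAt_rad_sq (hx s hs)
  have bound : ∀ s ∈ Icc 0 T, ‖2 * (x s 0 * u s (x s) 0 + x s 1 * u s (x s) 1)‖ ≤
      2 * M * ‖rad (x s) ^ 2‖ := fun s hs => by
    have hr := (hax s hs).rad_apply_le (hd s hs) (hM s hs) (x s)
    have hc := abs_mul_add_mul_le_rad_mul_rad (x s) (u s (x s))
    simp only [norm_mul, norm_pow, norm_eq_abs, abs_two, abs_of_nonneg (rad_nonneg _)]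
    nlinarith [rad_nonneg (x s)]
  have hfwd := norm_le_norm_mul_exp_of_norm_deriv_le hderiv bound ht
  have hbwd := norm_le_norm_mul_exp_of_norm_deriv_le_rev hderiv bound ht
  simp only [norm_pow, norm_eq_abs, abs_of_nonneg (rad_nonneg _), sub_zero] at hfwd hbwd
  have hexp : exp (2 * M * t) = exp (M * t) ^ 2 := by rw [← exp_nat_mul]; ring_nf
  rw [hexp, ← mul_pow] at hfwd hbwd
  have hE := (exp_pos (M * t)).le
  exact ⟨(pow_le_pow_iff_left₀ (rad_nonneg _) (mul_nonneg (rad_nonneg _) hE) two_ne_zero).1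
    hfwd, (pow_le_pow_iff_left₀ (rad_nonneg _) (mul_nonneg (rad_nonneg _) hE) two_ne_zero).1 hbwd⟩

theorem Bichar.norm_amplitude_le {u : ℝ → V3 → V3} {x ξ b : ℝ → V3} {T M : ℝ}
    (hB : Bichar u x ξ b T)
    (hM : ∀ s ∈ Icc 0 T, ∀ y, ‖fderiv ℝ (u s) y‖ ≤ M) {t : ℝ} (ht : t ∈ Icc 0 T) :
    ‖b t‖ ≤ ‖b 0‖ * exp (M * t) := by
  simpa using norm_le_norm_mul_exp_of_norm_deriv_le (fun s hs => (hB s hs).2.2)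
    (fun s hs => by
      rw [norm_neg_add_two_inner_div_smul]
      exact (ContinuousLinearMap.le_opNorm _ _).trans
        (mul_le_mul_of_nonneg_right (hM s hs _) (norm_nonneg _))) ht

theorem Bichar.rad_rpow_mul_norm_le {u : ℝ → V3 → V3} {x ξ b : ℝ → V3} {T M : ℝ}
    (hB : Bichar u x ξ b T) (hax : ∀ s ∈ Icc 0 T, AxiSymm (u s))
    (hd : ∀ s ∈ Icc 0 T, Differentiable ℝ (u s))
    (hM : ∀ s ∈ Icc 0 T, ∀ y, ‖fderiv ℝ (u s) y‖ ≤ M) (hM0 : 0 ≤ M) {α : ℝ}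
    (hb0 : ‖b 0‖ = rad (x 0) ^ (-α)) {t : ℝ} (ht : t ∈ Icc 0 T) :
    rad (x t) ^ α * ‖b t‖ ≤ exp (M * T) ^ |α| * exp (M * T) := by
  have hexp : exp (M * t) ≤ exp (M * T) := exp_le_exp.2 (mul_le_mul_of_nonneg_left ht.2 hM0)
  have grow {p q : ℝ} (hq : 0 ≤ q) (h : p ≤ q * exp (M * t)) : p ≤ q * exp (M * T) :=
    h.trans (mul_le_mul_of_nonneg_left hexp hq)
  obtain ⟨hout, hin⟩ := rad_flow_le (fun s hs => (hB s hs).1) hax hd hM ht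
  have hratio := rpow_mul_rpow_neg_le_rpow_abs α (rad_nonneg _) (rad_nonneg _) (exp_pos _)
    (grow (rad_nonneg _) hout) (grow (rad_nonneg _) hin)
  have hb : ‖b t‖ ≤ rad (x 0) ^ (-α) * exp (M * T) :=
    hb0 ▸ grow (norm_nonneg _) (hB.norm_amplitude_le hM ht)
  calc rad (x t) ^ α * ‖b t‖
      ≤ rad (x t) ^ α * (rad (x 0) ^ (-α) * exp (M * T)) :=
        mul_le_mul_of_nonneg_left hb (rpow_nonneg (rad_nonneg _) _)
    _ = rad (x t) ^ α * rad (x 0) ^ (-α) * exp (M * T) := by ring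
    _ ≤ exp (M * T) ^ |α| * exp (M * T) := mul_le_mul_of_nonneg_right hratio (exp_pos _).le

theorem beta_finite_general
    (Ω : Set V3) (T : ℝ) (hT : 0 < T)
    (u : ℝ → V3 → V3) (hax : ∀ t, AxiSymm (u t))
    (hu : ∀ t ∈ Set.Icc 0 T, ContDiff ℝ 1 (u t))
    (hbd : ∃ M : ℝ, ∀ t ∈ Set.Icc 0 T, ∀ x : V3, ‖fderiv ℝ (u t) x‖ ≤ M)
    (α : ℝ) :
    (∃ M : ℝ, ∀ x ξ b : ℝ → V3, Bichar u x ξ b T → x 0 ∈ Ω →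
      ⟪ξ 0, eθ (x 0)⟫ = 0 → ‖ξ 0‖ = 1 → ⟪b 0, ξ 0⟫ = 0 → ‖b 0‖ = rad (x 0) ^ (-α) →
      ∀ t ∈ Set.Icc 0 T, rad (x t) ^ α * ‖b t‖ ≤ M) ∧
    beta Ω u (-α) T < ⊤ := by
  obtain ⟨M, hM⟩ := hbd
  have hM0 : 0 ≤ M := (norm_nonneg _).trans (hM 0 ⟨le_rfl, hT.le⟩ 0)
  have bound : ∀ x ξ b : ℝ → V3, Bichar u x ξ b T → ‖b 0‖ = rad (x 0) ^ (-α) →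
      ∀ t ∈ Icc 0 T, rad (x t) ^ α * ‖b t‖ ≤ exp (M * T) ^ |α| * exp (M * T) :=
    fun _ _ _ hB hb0 _ ht => hB.rad_rpow_mul_norm_le (fun s _ => hax s)
      (fun s hs => (hu s hs).differentiable one_ne_zero) hM hM0 hb0 ht
  refine ⟨⟨_, fun x ξ b hB _ _ _ _ hb0 => bound x ξ b hB hb0⟩, ?_⟩
  have hbeta : beta Ω u (-α) T ≤ ENNReal.ofReal (exp (M * T) ^ |α| * exp (M * T)) :=
    iSup₂_le fun s hs => by
      rw [neg_neg]
      exact ENNReal.ofReal_le_ofReal (bound _ _ _ hs.1 hs.2.2.2.2.2 T ⟨hT.le, le_rfl⟩)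
  exact hbeta.trans_lt ENNReal.ofReal_lt_top

/-- **Finiteness of `β_{-α}(T)`**: for an axisymmetric field `u ∈ C⁰([0,T],C¹)` with
bounded gradient, `r_t^α b_t` remains bounded on `[0,T]`, uniformly over admissible
initial data; in particular `β_{-α}(T) < ∞`. -/
theorem beta_finite
    (Ω : Set V3) (hΩ : GoodDomain Ω) (T : ℝ) (hT : 0 < T)
    (u : ℝ → V3 → V3) (hax : ∀ t, AxiSymm (u t))
    (hu : ∀ t ∈ Set.Icc 0 T, ContDiff ℝ 1 (u t))
    (hbd : ∃ M : ℝ, ∀ t ∈ Set.Icc 0 T, ∀ x : V3, ‖fderiv ℝ (u t) x‖ ≤ M)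
    (α : ℝ) :
    (∃ M : ℝ, ∀ x ξ b : ℝ → V3, Bichar u x ξ b T → x 0 ∈ Ω →
      ⟪ξ 0, eθ (x 0)⟫ = 0 → ‖ξ 0‖ = 1 → ⟪b 0, ξ 0⟫ = 0 → ‖b 0‖ = rad (x 0) ^ (-α) →
      ∀ t ∈ Set.Icc 0 T, rad (x t) ^ α * ‖b t‖ ≤ M) ∧
    beta Ω u (-α) T < ⊤ :=
  beta_finite_general Ω T hT u hax hu hbd α

end AxiEuler
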